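/- Let A be a Schur ring over the infinite dihedral group D∞ such that Z = ⟨z⟩ is an A-subgroup, every basic set of A contained in Z is of the form {z^j, z^{−j}}, and the basic set of A containing s is {s, z^i s} for some odd integer i. Then for every j ∈ ℤ, the set {z^{i+j} s, z^{−j} s} is a basic set of A; consequently the basic sets of A are exactly the sets {z^j s, z^{i−j} s} for j ∈ ℤ together with the sets {z^j, z^{−j}} for j ∈ ℤ. -/

import Mathlib

open scoped BigOperators

/-- A Schur ring over the group `G` with coefficients in the field `F`, presented by its
partition into finite nonempty basic sets. -/
structure SchurRing (F : Type) [Field F] [CharZero F] (G : Type) [Group G] [DecidableEq G] where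
  /-- the basic sets -/
  parts : Set (Finset G)
  nonempty : ∀ C ∈ parts, C.Nonempty
  cover : ∀ g : G, ∃ C ∈ parts, g ∈ C
  eq_or_disjoint : ∀ C ∈ parts, ∀ D ∈ parts, C = D ∨ Disjoint C D
  one_mem : ({1} : Finset G) ∈ parts
  inv_mem : ∀ C ∈ parts, C.image (·⁻¹) ∈ parts
  mul_mem : ∀ C ∈ parts, ∀ D ∈ parts, ∃ S : Finset (Finset G),
    (↑S : Set (Finset G)) ⊆ parts ∧ ∃ coef : Finset G → F,
      (∑ g ∈ C, MonoidAlgebra.single g (1 : F)) * (∑ g ∈ D, MonoidAlgebra.single g (1 : F))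
        = ∑ E ∈ S, coef E • ∑ g ∈ E, MonoidAlgebra.single g (1 : F)

/-- A subset of `G` is an `A`-set if it is a union of basic sets of `A`. -/
def SchurRing.IsASet {F : Type} [Field F] [CharZero F] {G : Type} [Group G] [DecidableEq G]
    (A : SchurRing F G) (X : Set G) : Prop :=
  ∃ 𝒮 : Set (Finset G), 𝒮 ⊆ A.parts ∧ X = ⋃ C ∈ 𝒮, (C : Set G)

/-- The infinite dihedral group, realized as `DihedralGroup 0`. -/
abbrev Dinf : Type := DihedralGroup 0

/-- The generator `z` of infinite order. -/
def zz : Dinf := DihedralGroup.r 1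

/-- The reflection `s` of order two. -/
def ss : Dinf := DihedralGroup.sr 0

/-! The support of a product `C̄ D̄` of basic quantities is the set product `C * D` (the
coefficients are counts of factorizations, nonzero in characteristic 0), and these
coefficients are constant on basic sets; so every basic set meeting `C * D` lies inside it.
Write `X` for the basic set `{s, z^i s}`. The basic set containing `z^(i+j) s` then lies in
both `{z^j, z^(-j)} * X` and `{z^(i+j), z^(-(i+j))} * X`, whose intersection is
`{z^(i+j) s, z^(-j) s}` because `i` is odd. It is not a singleton `{z^k s}`: the support
`{z^k, z^(k-i)}` of `{z^k s} * X` would then contain both `{z^k, z^(-k)}` and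
`{z^(k-i), z^(i-k)}`, forcing `k = 0` and `i = 0`. -/

open Finset
open scoped Pointwise

section SimpleQuantity

variable {F G : Type*} [Semiring F]

variable (F) in
/-- The simple quantity `C̄ = ∑_{g ∈ C} g` in `F[G]`. -/
noncomputable def simpleQuantity (C : Finset G) : MonoidAlgebra F G :=
  ∑ g ∈ C, MonoidAlgebra.single g 1

theorem simpleQuantity_coeff [DecidableEq G] (C : Finset G) (g : G) :
    (simpleQuantity F C).coeff g = if g ∈ C then 1 else 0 := by
  simp [simpleQuantity, MonoidAlgebra.coeff_sum, Finsupp.single_apply]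

variable [Monoid G] [DecidableEq G]

theorem simpleQuantity_mul_coeff (C D : Finset G) (g : G) :
    (simpleQuantity F C * simpleQuantity F D).coeff g = #{p ∈ C ×ˢ D | p.1 * p.2 = g} := by
  simp only [simpleQuantity, sum_mul_sum, MonoidAlgebra.single_mul_single, one_mul,
    MonoidAlgebra.coeff_sum, MonoidAlgebra.coeff_single, Finsupp.finsetSum_apply,
    Finsupp.single_apply]
  rw [← sum_product', card_filter]
  push_cast
  rfl

theorem simpleQuantity_mul_coeff_ne_zero_iff [CharZero F] (C D : Finset G) (g : G) :
    (simpleQuantity F C * simpleQuantity F D).coeff g ≠ 0 ↔ g ∈ C * D := by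
  rw [simpleQuantity_mul_coeff, Nat.cast_ne_zero, ← Nat.pos_iff_ne_zero, card_pos,
    filter_nonempty_iff, mem_mul]
  simp [and_assoc]

end SimpleQuantity

namespace SchurRing

variable {F G : Type} [Field F] [CharZero F] [Group G] [DecidableEq G] (A : SchurRing F G)

theorem eq_of_mem_of_mem {C D : Finset G} (hC : C ∈ A.parts) (hD : D ∈ A.parts) {g : G}
    (hgC : g ∈ C) (hgD : g ∈ D) : C = D :=
  (A.eq_or_disjoint C hC D hD).resolve_right (not_disjoint_iff.2 ⟨g, hgC, hgD⟩)

theorem coe_subset_of_isASet {X : Set G} (hX : A.IsASet X) {C : Finset G} (hC : C ∈ A.parts)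
    {g : G} (hgC : g ∈ C) (hgX : g ∈ X) : (C : Set G) ⊆ X := by
  obtain ⟨𝒮, h𝒮, rfl⟩ := hX
  obtain ⟨D, hD, hgD⟩ := Set.mem_iUnion₂.1 hgX
  obtain rfl := A.eq_of_mem_of_mem hC (h𝒮 hD) hgC hgD
  exact Set.subset_biUnion_of_mem (u := fun C : Finset G => (C : Set G)) hD

theorem simpleQuantity_mul_coeff_eq {C D E : Finset G} (hC : C ∈ A.parts) (hD : D ∈ A.parts)
    (hE : E ∈ A.parts) {g h : G} (hg : g ∈ E) (hh : h ∈ E) :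
    (simpleQuantity F C * simpleQuantity F D).coeff g =
      (simpleQuantity F C * simpleQuantity F D).coeff h := by
  obtain ⟨S, hS, coef, hCD⟩ := A.mul_mem C hC D hD
  have hcoeff (x : G) :
      (simpleQuantity F C * simpleQuantity F D).coeff x = ∑ E' ∈ S with x ∈ E', coef E' := by
    rw [simpleQuantity, simpleQuantity, hCD, MonoidAlgebra.coeff_sum, Finsupp.finsetSum_apply,
      sum_filter]
    refine sum_congr rfl fun E' _ => ?_
    rw [MonoidAlgebra.coeff_smul_apply, ← simpleQuantity, simpleQuantity_coeff]
    simp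
  have hmem (E' : Finset G) (hE' : E' ∈ S) : g ∈ E' ↔ h ∈ E' := by
    constructor <;> intro hx
    · rwa [A.eq_of_mem_of_mem (hS hE') hE hx hg]
    · rwa [A.eq_of_mem_of_mem (hS hE') hE hx hh]
  rw [hcoeff, hcoeff, filter_congr hmem]

theorem subset_mul_of_mem {C D E : Finset G} (hC : C ∈ A.parts) (hD : D ∈ A.parts)
    (hE : E ∈ A.parts) {g : G} (hgE : g ∈ E) (hgCD : g ∈ C * D) : E ⊆ C * D := fun h hh => by
  rw [← simpleQuantity_mul_coeff_ne_zero_iff (F := F)] at hgCD ⊢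
  rwa [A.simpleQuantity_mul_coeff_eq hC hD hE hh hgE]

end SchurRing

section Dinf

open DihedralGroup

theorem zz_zpow (j : ℤ) : zz ^ j = r (Int.cast j) := r_one_zpow j

theorem zz_zpow_mul_ss (j : ℤ) : zz ^ j * ss = sr (Int.cast (-j)) := by
  rw [zz_zpow, ss, r_mul_sr, zero_sub, Int.cast_neg]

@[simp] theorem zz_zpow_inj {a b : ℤ} : zz ^ a = zz ^ b ↔ a = b := by
  rw [zz_zpow, zz_zpow, r.injEq, Int.cast_inj]

@[simp] theorem zz_zpow_mul_ss_inj {a b : ℤ} : zz ^ a * ss = zz ^ b * ss ↔ a = b := by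
  rw [zz_zpow_mul_ss, zz_zpow_mul_ss, sr.injEq, Int.cast_inj, neg_inj]

@[simp] theorem zz_zpow_ne_zpow_mul_ss (a b : ℤ) : zz ^ a ≠ zz ^ b * ss := by
  rw [zz_zpow, zz_zpow_mul_ss]
  exact nofun

@[simp] theorem zz_zpow_mul_ss_ne_zpow (a b : ℤ) : zz ^ a * ss ≠ zz ^ b :=
  (zz_zpow_ne_zpow_mul_ss b a).symm

@[simp] theorem zz_zpow_mul_ss_mul_ss (a : ℤ) : zz ^ a * ss * ss = zz ^ a := by
  rw [mul_assoc, ss, sr_mul_self, mul_one]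

@[simp] theorem zz_zpow_mul_zpow_mul_ss (a b : ℤ) : zz ^ a * (zz ^ b * ss) = zz ^ (a + b) * ss := by
  rw [← mul_assoc, ← zpow_add]

@[simp] theorem zz_zpow_mul_ss_mul_zpow_mul_ss (a b : ℤ) :
    zz ^ a * ss * (zz ^ b * ss) = zz ^ (a - b) := by
  rw [zz_zpow_mul_ss, zz_zpow_mul_ss, sr_mul_sr, zz_zpow]
  push_cast
  ring_nf

theorem Dinf.exists_eq_zpow_or_eq_zpow_mul_ss (g : Dinf) :
    (∃ a : ℤ, g = zz ^ a) ∨ ∃ a : ℤ, g = zz ^ a * ss := by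
  rcases g with a | a
  · exact .inl ⟨ZMod.cast a, by rw [zz_zpow, ZMod.intCast_zmod_cast]⟩
  · exact .inr ⟨-ZMod.cast a, by rw [zz_zpow_mul_ss, neg_neg, ZMod.intCast_zmod_cast]⟩

variable {F : Type} [Field F] [CharZero F] (A : SchurRing F Dinf)

theorem zz_zpow_pair_mem_parts (hZ : A.IsASet (Subgroup.zpowers zz : Subgroup Dinf))
    (hsym : ∀ C ∈ A.parts, (C : Set Dinf) ⊆ (Subgroup.zpowers zz : Subgroup Dinf) →
      ∃ j : ℤ, C = {zz ^ j, zz ^ (-j)})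
    (j : ℤ) : ({zz ^ j, zz ^ (-j)} : Finset Dinf) ∈ A.parts := by
  obtain ⟨C, hC, hjC⟩ := A.cover (zz ^ j)
  obtain ⟨k, rfl⟩ := hsym C hC (A.coe_subset_of_isASet hZ hC hjC (Subgroup.zpow_mem_zpowers zz j))
  obtain rfl | rfl : j = k ∨ j = -k := by simpa [-zpow_neg] using hjC
  · exact hC
  · rwa [neg_neg, pair_comm]

theorem singleton_zz_zpow_mul_ss_not_mem_parts
    (hpair : ∀ j : ℤ, ({zz ^ j, zz ^ (-j)} : Finset Dinf) ∈ A.parts) {i : ℤ} (hi : Odd i)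
    (hD : ({ss, zz ^ i * ss} : Finset Dinf) ∈ A.parts) (k : ℤ) :
    ({zz ^ k * ss} : Finset Dinf) ∉ A.parts := by
  intro hk
  have hneg (n : ℤ) (hn : zz ^ n ∈ ({zz ^ k * ss} : Finset Dinf) * {ss, zz ^ i * ss}) :
      zz ^ (-n) ∈ ({zz ^ k * ss} : Finset Dinf) * {ss, zz ^ i * ss} :=
    A.subset_mul_of_mem hk hD (hpair n) (mem_insert_self _ _) hn (by simp [-zpow_neg])
  have h₁ := hneg k (by simp [mem_mul])
  have h₂ := hneg (k - i) (by simp [mem_mul])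
  simp [mem_mul, -zpow_neg] at h₁ h₂
  obtain ⟨m, rfl⟩ := hi
  omega

theorem zz_zpow_mul_ss_pair_mem_parts
    (hpair : ∀ j : ℤ, ({zz ^ j, zz ^ (-j)} : Finset Dinf) ∈ A.parts) {i : ℤ} (hi : Odd i)
    (hD : ({ss, zz ^ i * ss} : Finset Dinf) ∈ A.parts) (j : ℤ) :
    ({zz ^ (i + j) * ss, zz ^ (-j) * ss} : Finset Dinf) ∈ A.parts := by
  obtain ⟨E, hE, hjE⟩ := A.cover (zz ^ (i + j) * ss)
  have h₁ := A.subset_mul_of_mem (hpair j) hD hE hjE (by simp [mem_mul, add_comm])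
  have h₂ := A.subset_mul_of_mem (hpair (i + j)) hD hE hjE (by simp [mem_mul])
  have hsub : E ⊆ {zz ^ (i + j) * ss, zz ^ (-j) * ss} := by
    intro g hg
    have hg₁ := h₁ hg
    have hg₂ := h₂ hg
    obtain ⟨m, rfl⟩ := hi
    rcases Dinf.exists_eq_zpow_or_eq_zpow_mul_ss g with ⟨a, rfl⟩ | ⟨a, rfl⟩ <;>
      simp [mem_mul, -zpow_neg] at hg₁ hg₂ ⊢
    omega
  by_cases hw : zz ^ (-j) * ss ∈ E
  · rwa [hsub.antisymm (insert_subset hjE (singleton_subset_iff.2 hw))] at hE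
  · refine absurd ?_ (singleton_zz_zpow_mul_ss_not_mem_parts A hpair hi hD (i + j))
    rwa [eq_singleton_iff_unique_mem.2 ⟨hjE, fun g hg => ?_⟩] at hE
    exact (mem_insert.1 (hsub hg)).resolve_right fun h => hw (mem_singleton.1 h ▸ hg)

end Dinf

/-- Suppose `⟨z⟩` is an `A`-subgroup, every basic set inside `⟨z⟩` has the form `{z^j, z^(-j)}`,
and the basic set containing `s` is `{s, z^i s}` with `i` odd. Then each `{z^(i+j) s, z^(-j) s}`
is a basic set, and the basic sets are exactly the sets `{z^j s, z^(i-j) s}` together with the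
sets `{z^j, z^(-j)}`. -/
theorem stmt_9 (F : Type) [Field F] [CharZero F] (A : SchurRing F Dinf)
    (hZ : A.IsASet (Subgroup.zpowers zz : Subgroup Dinf))
    (hsym : ∀ C ∈ A.parts, (C : Set Dinf) ⊆ (Subgroup.zpowers zz : Subgroup Dinf) →
      ∃ j : ℤ, C = {zz ^ j, zz ^ (-j)})
    (i : ℤ) (hi : Odd i) (hD : ({ss, zz ^ i * ss} : Finset Dinf) ∈ A.parts) :
    (∀ j : ℤ, ({zz ^ (i + j) * ss, zz ^ (-j) * ss} : Finset Dinf) ∈ A.parts) ∧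
    A.parts =
      {C : Finset Dinf | ∃ j : ℤ, C = {zz ^ j * ss, zz ^ (i - j) * ss}} ∪
      {C : Finset Dinf | ∃ j : ℤ, C = {zz ^ j, zz ^ (-j)}} := by
  have hpair := zz_zpow_pair_mem_parts A hZ hsym
  have hrefl := zz_zpow_mul_ss_pair_mem_parts A hpair hi hD
  have hrefl' (j : ℤ) : ({zz ^ j * ss, zz ^ (i - j) * ss} : Finset Dinf) ∈ A.parts := by
    convert hrefl (-j) using 1
    rw [neg_neg, pair_comm, sub_eq_add_neg]
  refine ⟨hrefl, Set.Subset.antisymm (fun C hC => ?_) ?_⟩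
  · obtain ⟨g, hg⟩ := A.nonempty C hC
    rcases Dinf.exists_eq_zpow_or_eq_zpow_mul_ss g with ⟨a, rfl⟩ | ⟨a, rfl⟩
    · exact .inr ⟨a, A.eq_of_mem_of_mem hC (hpair a) hg (mem_insert_self _ _)⟩
    · exact .inl ⟨a, A.eq_of_mem_of_mem hC (hrefl' a) hg (mem_insert_self _ _)⟩
  · rintro C (⟨j, rfl⟩ | ⟨j, rfl⟩)
    · exact hrefl' j
    · exact hpair j
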